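/- Let $\overline{S} \in \mathbb{S}^n_+$ and $\overline{X} \in \mathbb{S}^n_+$ satisfy $\langle \overline{X}, \overline{S}\rangle = 0$ (equivalently, $-\overline{X} \in \partial\delta_{\mathbb{S}^n_+}(\overline{S})$). Then the subdifferential mapping $\partial\delta_{\mathbb{S}^n_-}(\cdot) = \mathcal{N}_{\mathbb{S}^n_-}(\cdot)$ is metrically subregular at $-\overline{S}$ for $\overline{X}$: there exist $\kappa > 0$ and a neighborhood $\mathcal{U}$ of $\overline{S}$ such that for all $S \in \mathbb{S}^n_+ \cap \mathcal{U}$, $0 \ge \langle \overline{X}, \overline{S} - S\rangle + \kappa\,\mathrm{dist}^2(-S, \mathcal{N}_{\mathbb{S}^n_+}(\overline{X}))$. -/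

import Mathlib

/-!
Let `Q` be the orthogonal projection onto the range of `X̄` and `l` the smallest positive
eigenvalue of `X̄`, so that `l • Q ≤ X̄`. For `S ⪰ 0` the matrix `-(P S P)`, with `P = 1 - Q`,
lies in `N_{𝕊ⁿ₊}(X̄)`, and `S - P S P = Q S + P (S Q)` has Frobenius norm at most `2 ‖Q S‖`.
Writing `S = Bᵀ B`, submultiplicativity gives `‖Q S‖² ≤ tr (Q S) · tr S`, while
`l · tr (Q S) ≤ tr (X̄ S) = -⟨X̄, S̄ - S⟩`. Hence the inequality holds with
`κ = l / (4 (tr S̄ + 1))` on the neighbourhood `{S | tr S < tr S̄ + 1}` of `S̄`.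
-/

open Matrix
attribute [local instance] Matrix.frobeniusNormedAddCommGroup

/-- The normal cone (in the ambient space `𝕊ⁿ` of symmetric matrices) of a set `D` of
symmetric matrices at a point `x`. -/
def matNormalCone {n : ℕ} (D : Set (Matrix (Fin n) (Fin n) ℝ))
    (x : Matrix (Fin n) (Fin n) ℝ) : Set (Matrix (Fin n) (Fin n) ℝ) :=
  {H | H.IsSymm ∧ ∀ z ∈ D, Matrix.trace (Hᵀ * (z - x)) ≤ 0}

open Filter Topology
open scoped MatrixOrder

theorem Set.Finite.exists_pos_le_of_pos {s : Set ℝ} (hs : s.Finite) :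
    ∃ l > (0 : ℝ), ∀ x ∈ s, 0 < x → l ≤ x := by
  have h : ∀ᶠ l in 𝓝[>] (0 : ℝ), 0 < l ∧ ∀ x ∈ s, 0 < x → l ≤ x := by
    refine eventually_mem_nhdsWithin.and ((hs.eventually_all).2 fun x _ => ?_)
    by_cases hx : 0 < x
    · filter_upwards [nhdsWithin_le_nhds (Iic_mem_nhds hx)] with l hl _ using hl
    · exact .of_forall fun _ h => absurd h hx
  exact h.exists

namespace Matrix

variable {m n : Type*} [Fintype m] [Fintype n]

theorem frobenius_norm_sq_eq_trace (A : Matrix m n ℝ) : ‖A‖ ^ 2 = (Aᵀ * A).trace := by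
  rw [frobenius_norm_def, ← Real.rpow_natCast, ← Real.rpow_mul (by positivity)]
  simp [trace, mul_apply, Finset.sum_comm (γ := m), sq]

theorem PosSemidef.trace_mul_nonneg {A B : Matrix n n ℝ} (hA : A.PosSemidef)
    (hB : B.PosSemidef) : 0 ≤ (A * B).trace := by
  classical
  obtain ⟨C, rfl⟩ := CStarAlgebra.nonneg_iff_eq_star_mul_self.mp hA.nonneg
  rw [star_eq_conjTranspose, trace_mul_cycle, trace_mul_comm, ← Matrix.mul_assoc]
  exact (hB.mul_mul_conjTranspose_same C).trace_nonneg

omit [Fintype n] in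
theorem PosSemidef.transpose_eq {A : Matrix n n ℝ} (hA : A.PosSemidef) : Aᵀ = A := by
  rw [← conjTranspose_eq_transpose_of_trivial]
  exact hA.1

theorem norm_sq_eq_norm_mul_sq_add [DecidableEq n] {P : Matrix n n ℝ} (hPt : Pᵀ = P)
    (hPP : IsIdempotentElem P) (M : Matrix n m ℝ) :
    ‖M‖ ^ 2 = ‖P * M‖ ^ 2 + ‖(1 - P) * M‖ ^ 2 := by
  have hproj : ∀ R : Matrix n n ℝ, Rᵀ = R → IsIdempotentElem R →
      ‖R * M‖ ^ 2 = (Mᵀ * R * M).trace := fun R hRt hRR => by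
    rw [frobenius_norm_sq_eq_trace, transpose_mul, hRt, Matrix.mul_assoc, ← Matrix.mul_assoc R,
      hRR.eq, Matrix.mul_assoc]
  rw [hproj P hPt hPP, hproj _ (by simp [hPt]) hPP.one_sub, frobenius_norm_sq_eq_trace,
    ← trace_add]
  simp [Matrix.mul_sub, Matrix.sub_mul]

theorem norm_mul_le_of_isIdempotentElem [DecidableEq n] {P : Matrix n n ℝ} (hPt : Pᵀ = P)
    (hPP : IsIdempotentElem P) (M : Matrix n m ℝ) : ‖P * M‖ ≤ ‖M‖ := by
  refine (pow_le_pow_iff_left₀ (norm_nonneg _) (norm_nonneg _) two_ne_zero).1 ?_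
  rw [norm_sq_eq_norm_mul_sq_add hPt hPP M]
  exact le_add_of_nonneg_right (sq_nonneg _)

theorem norm_mul_sq_le_trace_mul_trace {S : Matrix n n ℝ} (hS : S.PosSemidef)
    (M : Matrix m n ℝ) : ‖M * S‖ ^ 2 ≤ (Mᵀ * M * S).trace * S.trace := by
  classical
  obtain ⟨B, rfl⟩ := CStarAlgebra.nonneg_iff_eq_star_mul_self.mp hS.nonneg
  rw [star_eq_conjTranspose, conjTranspose_eq_transpose_of_trivial]
  have hMB : ‖M * Bᵀ‖ ^ 2 = (Mᵀ * M * (Bᵀ * B)).trace := by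
    rw [frobenius_norm_sq_eq_trace, transpose_mul, transpose_transpose]
    simp only [Matrix.mul_assoc]
    rw [trace_mul_comm]
    simp only [Matrix.mul_assoc]
  calc ‖M * (Bᵀ * B)‖ ^ 2 ≤ (‖M * Bᵀ‖ * ‖B‖) ^ 2 := by
        rw [← Matrix.mul_assoc]
        exact pow_le_pow_left₀ (norm_nonneg _) (frobenius_norm_mul _ _) 2
    _ = _ := by rw [mul_pow, hMB, frobenius_norm_sq_eq_trace]

variable [DecidableEq n]

theorem PosSemidef.exists_idempotent_smul_le {X : Matrix n n ℝ} (hX : X.PosSemidef) :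
    ∃ l > (0 : ℝ), ∃ Q : Matrix n n ℝ,
      Q.PosSemidef ∧ IsIdempotentElem Q ∧ Q * X = X ∧ (X - l • Q).PosSemidef := by
  obtain ⟨l, hl, hgap⟩ := X.finite_real_spectrum.exists_pos_le_of_pos
  have hspec : ∀ x ∈ spectrum ℝ X, 0 ≤ x := fun x hx => spectrum_nonneg_of_nonneg hX.nonneg hx
  -- a continuous function that agrees on `spectrum ℝ X` with the indicator of `x ≠ 0`
  set f : ℝ → ℝ := fun x => min (x / l) 1
  have hf : ∀ x ∈ spectrum ℝ X, x = 0 ∨ f x = 1 := fun x hx => by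
    rcases (hspec x hx).eq_or_lt with h | h
    · exact .inl h.symm
    · exact .inr (min_eq_right ((one_le_div hl).2 (hgap x hx h)))
  have hsub : X - l • cfc f X = cfc (fun x => x - l * f x) X := by
    rw [cfc_sub .., cfc_const_mul .., cfc_id' ℝ X]
  refine ⟨l, hl, cfc f X, ?_, ?_, ?_, ?_⟩
  · exact nonneg_iff_posSemidef.1 <|
      cfc_nonneg fun x hx => le_min (div_nonneg (hspec x hx) hl.le) zero_le_one
  · rw [IsIdempotentElem, ← cfc_mul ..]
    refine cfc_congr fun x hx => ?_
    rcases hf x hx with h | h <;> simp [h, f]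
  · conv_lhs => enter [2]; rw [← cfc_id' ℝ X]
    rw [← cfc_mul ..]
    refine (cfc_congr fun x hx => ?_).trans (cfc_id' ℝ X)
    rcases hf x hx with h | h <;> simp [h, f]
  · rw [hsub]
    refine nonneg_iff_posSemidef.1 (cfc_nonneg fun x _ => ?_)
    have : l * f x ≤ x := by
      calc l * f x ≤ l * (x / l) := mul_le_mul_of_nonneg_left (min_le_left _ _) hl.le
        _ = x := mul_div_cancel₀ x hl.ne'
    linarith

end Matrix

theorem neg_mem_matNormalCone_of_mul_eq_zero {n : ℕ} {X Y : Matrix (Fin n) (Fin n) ℝ}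
    (hY : Y.PosSemidef) (hYX : Y * X = 0) :
    -Y ∈ matNormalCone {Z | Z.PosSemidef} X := by
  refine ⟨by rw [IsSymm, transpose_neg, hY.transpose_eq], fun Z hZ => ?_⟩
  rw [transpose_neg, hY.transpose_eq, Matrix.neg_mul, Matrix.mul_sub, hYX, sub_zero, trace_neg,
    neg_nonpos]
  exact hY.trace_mul_nonneg hZ

-- The witness is `-(P S P)`, where `P = 1 - Q` projects onto `ker X`.
theorem infDist_neg_matNormalCone_le {n : ℕ} {X Q S : Matrix (Fin n) (Fin n) ℝ}
    (hQt : Qᵀ = Q) (hQQ : IsIdempotentElem Q) (hQX : Q * X = X) (hS : S.PosSemidef) :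
    Metric.infDist (-S) (matNormalCone {Z | Z.PosSemidef} X) ≤ 2 * ‖Q * S‖ := by
  set P := 1 - Q
  have hPt : Pᵀ = P := by simp [P, hQt]
  have hPX : P * X = 0 := by simp [P, Matrix.sub_mul, hQX]
  have hY : (P * S * P).PosSemidef := by
    simpa [hPt] using hS.mul_mul_conjTranspose_same P
  have hYX : P * S * P * X = 0 := by rw [Matrix.mul_assoc _ P, hPX, Matrix.mul_zero]
  calc Metric.infDist (-S) (matNormalCone {Z | Z.PosSemidef} X)
      ≤ dist (-S) (-(P * S * P)) :=
        Metric.infDist_le_dist_of_mem (neg_mem_matNormalCone_of_mul_eq_zero hY hYX)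
    _ = ‖Q * S + P * (S * Q)‖ := by
        rw [dist_neg_neg, dist_eq_norm]
        congr 1
        simp only [P, Matrix.sub_mul, Matrix.mul_sub, Matrix.one_mul, Matrix.mul_one, Matrix.mul_assoc]
        abel
    _ ≤ ‖Q * S‖ + ‖S * Q‖ :=
        (norm_add_le _ _).trans <| by
          gcongr; exact norm_mul_le_of_isIdempotentElem hPt hQQ.one_sub _
    _ = 2 * ‖Q * S‖ := by
        rw [← frobenius_norm_transpose (S * Q), transpose_mul, hQt, hS.transpose_eq]
        ring

theorem mul_infDist_neg_matNormalCone_sq_le {n : ℕ} {X Q S : Matrix (Fin n) (Fin n) ℝ} {l : ℝ}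
    (hl : 0 ≤ l) (hQ : Q.PosSemidef) (hQQ : IsIdempotentElem Q) (hQX : Q * X = X)
    (hXQ : (X - l • Q).PosSemidef) (hS : S.PosSemidef) :
    l * Metric.infDist (-S) (matNormalCone {Z | Z.PosSemidef} X) ^ 2
      ≤ 4 * S.trace * (X * S).trace := by
  set d := Metric.infDist (-S) (matNormalCone {Z | Z.PosSemidef} X)
  have hd : d ≤ 2 * ‖Q * S‖ := infDist_neg_matNormalCone_le hQ.transpose_eq hQQ hQX hS
  have hQS : ‖Q * S‖ ^ 2 ≤ (Q * S).trace * S.trace := by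
    simpa [hQ.transpose_eq, hQQ.eq] using norm_mul_sq_le_trace_mul_trace hS Q
  have hXS : l * (Q * S).trace ≤ (X * S).trace := by
    have := hXQ.trace_mul_nonneg hS
    rw [Matrix.sub_mul, trace_sub, smul_mul, trace_smul, smul_eq_mul] at this
    linarith
  calc l * d ^ 2 ≤ l * (4 * ((Q * S).trace * S.trace)) := by
        gcongr
        nlinarith [Metric.infDist_nonneg (x := -S) (s := matNormalCone {Z | Z.PosSemidef} X)]
    _ = 4 * S.trace * (l * (Q * S).trace) := by ring
    _ ≤ 4 * S.trace * (X * S).trace := by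
        have := hS.trace_nonneg
        gcongr

theorem stmt6 {n : ℕ} (X Sbar : Matrix (Fin n) (Fin n) ℝ)
    (hX : X.PosSemidef) (hS : Sbar.PosSemidef)
    (hXS : Matrix.trace (Xᵀ * Sbar) = 0) :
    ∃ κ > (0 : ℝ), ∃ U ∈ nhds Sbar, ∀ S : Matrix (Fin n) (Fin n) ℝ,
      S.PosSemidef → S ∈ U →
        Matrix.trace (Xᵀ * (Sbar - S)) +
          κ * (Metric.infDist (-S)
            (matNormalCone {Y : Matrix (Fin n) (Fin n) ℝ | Y.PosSemidef} X)) ^ 2 ≤ 0 := by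
  obtain ⟨l, hl, Q, hQ, hQQ, hQX, hXQ⟩ := hX.exists_idempotent_smul_le
  set T := Sbar.trace + 1
  have hT : 0 < T := by linarith [hS.trace_nonneg]
  refine ⟨l / (4 * T), by positivity, {S | S.trace < T},
    (isOpen_lt continuous_id.matrix_trace continuous_const).mem_nhds (lt_add_one Sbar.trace), ?_⟩
  intro S hSpsd (hST : S.trace < T)
  have hkey := mul_infDist_neg_matNormalCone_sq_le hl.le hQ hQQ hQX hXQ hSpsd
  have hXS_nonneg : 0 ≤ (X * S).trace := hX.trace_mul_nonneg hSpsd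
  have hbound : l / (4 * T) * Metric.infDist (-S) (matNormalCone {Y | Y.PosSemidef} X) ^ 2
      ≤ (X * S).trace := by
    rw [div_mul_eq_mul_div, div_le_iff₀ (by positivity)]
    nlinarith
  rw [Matrix.mul_sub, trace_sub, hXS, hX.transpose_eq]
  linarith
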